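/- arXiv:1705.01501 — 3 statements merged into one kernel-verified Lean document; each statement's English description precedes it below -/
import Mathlib

section
/- For any alphabet α, any letter a : α, and any n : ℕ, the language of words containing at least n occurrences of a equals the language (⊤ * {[a]})^n * ⊤, where ⊤ is the language of all words and * denotes language concatenation. That is, { w : List α | n ≤ w.count a } = ((⊤ : Language α) * {[a]})^n * ⊤. -/
/-! Cutting a word just after its first `a` shows that `n + 1 ≤ w.count a` iff `w ∈ ⊤ · a · L`,
where `L` is the set of words with at least `n` letters `a`. Since
`(⊤ a)^(n+1) ⊤ = ⊤ a · ((⊤ a)^n ⊤)`, induction on `n` gives the theorem. -/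

theorem List.succ_le_count_iff {α : Type*} [DecidableEq α] {a : α} {n : ℕ} {w : List α} :
    n + 1 ≤ w.count a ↔ ∃ u v, w = u ++ a :: v ∧ n ≤ v.count a := by
  constructor
  · intro h
    induction w with
    | nil => simp at h
    | cons b w ih =>
      by_cases hb : b = a
      · subst hb
        exact ⟨[], w, rfl, by simpa using h⟩
      · obtain ⟨u, v, rfl, hv⟩ := ih (by simpa [List.count_cons, hb] using h)
        exact ⟨b :: u, v, rfl, hv⟩
  · rintro ⟨u, v, rfl, hv⟩
    simp only [List.count_append, List.count_cons_self]
    omega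

theorem Language.mem_top_mul_singleton_mul {α : Type*} {a : α} {L : Language α} {w : List α} :
    w ∈ (⊤ : Language α) * {[a]} * L ↔ ∃ u v, w = u ++ a :: v ∧ v ∈ L := by
  constructor
  · rintro ⟨_, ⟨u, _, _, rfl, rfl⟩, v, hv, rfl⟩
    exact ⟨u, v, by simp, hv⟩
  · rintro ⟨u, v, rfl, hv⟩
    have h : (u ++ [a]) ++ v ∈ (⊤ : Language α) * {[a]} * L :=
      Language.append_mem_mul (Language.append_mem_mul (Set.mem_univ u) rfl) hv
    simpa using h

theorem Language.mem_top_mul_singleton_pow_mul_top_iff {α : Type*} [DecidableEq α] {a : α}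
    {n : ℕ} {w : List α} :
    w ∈ ((⊤ : Language α) * {[a]}) ^ n * ⊤ ↔ n ≤ w.count a := by
  induction n generalizing w with
  | zero =>
    rw [pow_zero, one_mul]
    exact iff_of_true (Set.mem_univ w) (Nat.zero_le _)
  | succ n ih =>
    rw [pow_succ', mul_assoc, Language.mem_top_mul_singleton_mul, List.succ_le_count_iff]
    simp only [ih]

theorem threshold_counting_language {α : Type*} [DecidableEq α] (a : α) (n : ℕ) :
    { w : List α | n ≤ w.count a } =
      ((⊤ : Language α) * ({[a]} : Language α)) ^ n * (⊤ : Language α) := by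
  ext w
  exact Language.mem_top_mul_singleton_pow_mul_top_iff.symm
end

section
/- Fix an alphabet α, a letter a : α, and natural numbers n ≥ 1 and k < n. Let N = { w : List α | ∀ x ∈ w, x ≠ a } be the language of words avoiding a. Then the language of all words whose number of occurrences of a is congruent to k modulo n equals ((N * {[a]})^n)∗ * (N * {[a]})^k * N, where ∗ denotes Kleene star. That is, { w | w.count a % n = k } = (KStar ((N * {[a]})^n)) * (N * {[a]})^k * N. -/
/-!
Writing `B = N·a` for the blocks "a word avoiding `a`, then `a`", a word lies in `Bᵐ·N` exactly
when it contains `a` exactly `m` times: peel off the prefix up to the first occurrence of `a`.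
Since `(Bⁿ)∗ = ⋃ᵢ B^(n i)`, the right-hand side is `⋃ᵢ B^(n i + k)·N`, the words whose count of `a`
has the form `n i + k`, i.e. is `≡ k (mod n)` as `k < n`.
-/

namespace Language

variable {α : Type*}

def avoiding (a : α) : Language α := {w | ∀ x ∈ w, x ≠ a}

theorem mem_avoiding_iff_count_eq_zero [DecidableEq α] {a : α} {w : List α} :
    w ∈ avoiding a ↔ w.count a = 0 := by
  rw [List.count_eq_zero]
  exact ⟨fun h ha => h a ha rfl, fun h x hx hxa => h (hxa ▸ hx)⟩

theorem kstar_pow_mul_pow_mul (l m : Language α) (n k : ℕ) :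
    KStar.kstar (l ^ n) * l ^ k * m = ⨆ i : ℕ, l ^ (n * i + k) * m := by
  simp only [kstar_eq_iSup_pow, iSup_mul, pow_add, pow_mul]

theorem mem_avoiding_mul_singleton_pow_mul_avoiding_iff [DecidableEq α] (a : α) (m : ℕ)
    (w : List α) :
    w ∈ (avoiding a * {[a]}) ^ m * avoiding a ↔ w.count a = m := by
  induction m generalizing w with
  | zero => rw [pow_zero, one_mul, mem_avoiding_iff_count_eq_zero]
  | succ m ih =>
    rw [pow_succ', mul_assoc, mul_assoc, mem_mul]
    constructor
    · rintro ⟨u, hu, _, ⟨_, rfl, v, hv, rfl⟩, rfl⟩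
      simp [mem_avoiding_iff_count_eq_zero.mp hu, (ih v).mp hv]
    · intro hw
      have ha : a ∈ w := List.count_pos_iff.mp (by omega)
      obtain ⟨u, v, rfl, hu⟩ := List.eq_append_cons_of_mem ha
      have hu₀ : u.count a = 0 := List.count_eq_zero.mpr hu
      have hv : v.count a = m := by simpa [hu₀] using hw
      exact ⟨u, mem_avoiding_iff_count_eq_zero.mpr hu₀, [a] ++ v,
        ⟨[a], rfl, v, (ih v).mpr hv, rfl⟩, rfl⟩

end Language

open Language

theorem modulo_counting_language_general {α : Type*} [DecidableEq α] (a : α) (n k : ℕ)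
    (hk : k < n)
    (N : Language α) (hN : N = { w : List α | ∀ x ∈ w, x ≠ a }) :
    { w : List α | w.count a % n = k } =
      KStar.kstar ((N * ({[a]} : Language α)) ^ n) *
        (N * ({[a]} : Language α)) ^ k * N := by
  obtain rfl : N = avoiding a := hN
  rw [kstar_pow_mul_pow_mul]
  refine Language.ext fun w => ?_
  simp only [mem_iSup, mem_avoiding_mul_singleton_pow_mul_avoiding_iff]
  show w.count a % n = k ↔ _
  simp [Nat.mod_eq_iff, hk, Nat.ne_zero_of_lt hk]

theorem modulo_counting_language {α : Type*} [DecidableEq α] (a : α) (n k : ℕ)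
    (hn : 1 ≤ n) (hk : k < n)
    (N : Language α) (hN : N = { w : List α | ∀ x ∈ w, x ≠ a }) :
    { w : List α | w.count a % n = k } =
      KStar.kstar ((N * ({[a]} : Language α)) ^ n) *
        (N * ({[a]} : Language α)) ^ k * N :=
  modulo_counting_language_general a n k hk N hN
end

section
/- Let S be a finite set of reals, u < v reals, and c ≥ 0. Suppose the parity of |S ∩ (u, u+c]| equals the parity of |S ∩ (v, v+c]|, and |S ∩ (u, v]| is odd. Then |S ∩ (u+c, v+c]| is odd; in particular S has at least one point in the interval (u+c, v+c]. -/
open scoped Classical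

/-!
The interval `(u, v + c]` splits both as `(u, v] ∪ (v, v + c]` and as `(u, u + c] ∪ (u + c, v + c]`.
Comparing the two counts of `S` modulo 2, the hypotheses on `(u, v]`, `(u, u + c]` and `(v, v + c]`
force the count on `(u + c, v + c]` to be odd, hence positive.
-/

open Finset

lemma card_filter_Ioc_add_card_filter_Ioc {α : Type*} [LinearOrder α] (S : Finset α) {a b d : α}
    (hab : a ≤ b) (hbd : b ≤ d) :
    #(S.filter fun t => a < t ∧ t ≤ b) + #(S.filter fun t => b < t ∧ t ≤ d) =
      #(S.filter fun t => a < t ∧ t ≤ d) := by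
  rw [← card_union_of_disjoint (disjoint_filter.2 fun t _ h₁ h₂ => h₁.2.not_gt h₂.1), ← filter_or]
  congr 1
  refine filter_congr fun t _ => ⟨?_, fun h => ?_⟩
  · rintro (⟨hat, htb⟩ | ⟨hbt, htd⟩)
    exacts [⟨hat, htb.trans hbd⟩, ⟨hab.trans_lt hbt, htd⟩]
  · rcases le_or_gt t b with htb | hbt
    exacts [Or.inl ⟨h.1, htb⟩, Or.inr ⟨hbt, h.2⟩]

theorem copy_lemma (S : Finset ℝ) (u v c : ℝ) (huv : u < v) (hc : 0 ≤ c)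
    (hpar : (S.filter (fun t => u < t ∧ t ≤ u + c)).card % 2 =
            (S.filter (fun t => v < t ∧ t ≤ v + c)).card % 2)
    (hodd : Odd (S.filter (fun t => u < t ∧ t ≤ v)).card) :
    Odd (S.filter (fun t => u + c < t ∧ t ≤ v + c)).card ∧
      ∃ t ∈ S, u + c < t ∧ t ≤ v + c := by
  have hsplit_v := card_filter_Ioc_add_card_filter_Ioc S huv.le (le_add_of_nonneg_right hc)
  have hsplit_uc :=
    card_filter_Ioc_add_card_filter_Ioc S (le_add_of_nonneg_right hc) (by linarith : u + c ≤ v + c)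
  have hcopy : Odd (S.filter (fun t => u + c < t ∧ t ≤ v + c)).card := by
    rw [Nat.odd_iff] at hodd ⊢
    omega
  exact ⟨hcopy, filter_nonempty_iff.1 (card_pos.1 hcopy.pos)⟩
end
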